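/- Let A_Ξ be the twisted group algebra of ℤⁿ with derivations δ_j(e_r) = 2πi·r_j·e_r. Suppose x₁,…,xₙ ∈ A_Ξ satisfy the closedness condition δ_i(x_j) = δ_j(x_i) for all i, j. Then there exist constants t₁,…,tₙ ∈ ℂ and an element b ∈ A_Ξ such that x_j = t_j·e_0 + δ_j(b) for all j (i.e. every closed 1-form on the noncommutative torus is the sum of a constant form and an exact form). -/
import Mathlib


noncomputable section

/-- The underlying space of the algebraic noncommutative `n`-torus: finitely supported
`ℂ`-valued functions on `ℤⁿ`. -/
abbrev NCTorus (n : ℕ) := (Fin n → ℤ) →₀ ℂ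

/-- The bilinear form `rᵀ Ξ s = Σ_{k,j} r_k Ξ_{kj} s_j`. -/
def twForm {n : ℕ} (Ξ : Matrix (Fin n) (Fin n) ℝ) (r s : Fin n → ℤ) : ℝ :=
  ∑ k, ∑ j, (r k : ℝ) * Ξ k j * (s j : ℝ)

/-- The twisting cocycle `exp(2πi · rᵀΞs)`. -/
def twCocycle {n : ℕ} (Ξ : Matrix (Fin n) (Fin n) ℝ) (r s : Fin n → ℤ) : ℂ :=
  Complex.exp (2 * Real.pi * Complex.I * (twForm Ξ r s : ℂ))

/-- The twisted convolution product of the noncommutative torus: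
`e_r · e_s = exp(2πi·rᵀΞs) · e_{r+s}`, extended bilinearly. -/
def ncMul {n : ℕ} (Ξ : Matrix (Fin n) (Fin n) ℝ) (x y : NCTorus n) : NCTorus n :=
  x.sum fun r a => y.sum fun s b => Finsupp.single (r + s) (twCocycle Ξ r s * (a * b))

/-- The basis element `e_r`. -/
def ncE {n : ℕ} (r : Fin n → ℤ) : NCTorus n := Finsupp.single r 1

/-- The tracial state `τ₀`, extracting the coefficient of `e_0`. -/
def ncTau {n : ℕ} (x : NCTorus n) : ℂ := x 0

/-- The derivation `δ_j`, with `δ_j(e_r) = 2πi·r_j·e_r`. -/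
def ncDer {n : ℕ} (j : Fin n) (x : NCTorus n) : NCTorus n :=
  x.sum fun r a => Finsupp.single r ((2 * Real.pi * Complex.I * (r j : ℂ)) * a)

lemma ncDer_apply {n : ℕ} (j : Fin n) (x : NCTorus n) (r : Fin n → ℤ) :
    ncDer j x r = 2 * Real.pi * Complex.I * (r j : ℂ) * x r := by
  rw [ncDer, Finsupp.sum_apply]
  rw [Finsupp.sum_eq_single r (fun s _ hs => by simp [Finsupp.single_apply, hs])
    (fun _ => by simp)]
  simp [Finsupp.single_apply]

lemma two_pi_I_ne_zero : (2 * Real.pi * Complex.I : ℂ) ≠ 0 := by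
  simp [Real.pi_ne_zero, Complex.I_ne_zero, Complex.ofReal_ne_zero]

/-- Every closed 1-form on the noncommutative torus is the sum of a constant form and an
exact form: if `δ_i(x_j) = δ_j(x_i)` for all `i, j`, then there are constants `t_j ∈ ℂ` and
`b` such that `x_j = t_j·e_0 + δ_j(b)`. -/
theorem closed_one_form_eq_constant_add_exact {n : ℕ} (x : Fin n → NCTorus n)
    (hclosed : ∀ i j, ncDer i (x j) = ncDer j (x i)) :
    ∃ (t : Fin n → ℂ) (b : NCTorus n), ∀ j, x j = t j • ncE 0 + ncDer j b := by
  have hco : ∀ i j (r : Fin n → ℤ), (r i : ℂ) * x j r = (r j : ℂ) * x i r := by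
    intro i j r
    have h := congrFun (congrArg (⇑) (hclosed i j)) r
    rw [ncDer_apply, ncDer_apply] at h
    have := mul_left_cancel₀ two_pi_I_ne_zero (by linear_combination h :
      (2 * Real.pi * Complex.I : ℂ) * ((r i : ℂ) * x j r)
        = (2 * Real.pi * Complex.I) * ((r j : ℂ) * x i r))
    exact this
  set f : (Fin n → ℤ) → ℂ := fun r =>
    if h : ∃ k, r k ≠ 0 then x h.choose r / (2 * Real.pi * Complex.I * (r h.choose : ℂ))
    else 0 with hf
  have hsupp : ∀ r, f r ≠ 0 → r ∈ Finset.univ.biUnion fun j => (x j).support := by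
    intro r hr
    rw [hf] at hr
    beta_reduce at hr
    by_cases h : ∃ k, r k ≠ 0
    · rw [dif_pos h] at hr
      have : x h.choose r ≠ 0 := fun h0 => hr (by simp [h0])
      exact Finset.mem_biUnion.2 ⟨h.choose, Finset.mem_univ _, Finsupp.mem_support_iff.2 this⟩
    · exact absurd (dif_neg h) hr
  refine ⟨fun j => x j 0, Finsupp.onFinset _ f hsupp, fun j => ?_⟩
  ext r
  rw [Finsupp.add_apply, ncDer_apply]
  by_cases hr : r = 0
  · subst hr
    simp [ncE, Finsupp.single_apply]
  · have hk : ∃ k, r k ≠ 0 := by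
      by_contra h
      push_neg at h
      exact hr (funext fun k => h k)
    have hfr : (Finsupp.onFinset _ f hsupp) r = f r := rfl
    rw [hfr, hf]
    beta_reduce
    rw [dif_pos hk]
    set k := hk.choose with hkdef
    have hk0 : r k ≠ 0 := hk.choose_spec
    have hk0' : (r k : ℂ) ≠ 0 := Int.cast_ne_zero.2 hk0
    have hrel := hco k j r
    have h0 : (ncE (0 : Fin n → ℤ) : NCTorus n) r = 0 := by
      simp [ncE, Finsupp.single_apply, Ne.symm hr]
    rw [Finsupp.smul_apply, h0, smul_zero, zero_add]
    rw [mul_div_assoc', eq_comm, div_eq_iff (mul_ne_zero two_pi_I_ne_zero hk0')]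
    linear_combination (-(2 * Real.pi * Complex.I) : ℂ) * hrel

end
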